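/- arXiv:2112.10692 — 2 statements merged into one kernel-verified Lean document; each statement's English description precedes it below -/
import Mathlib

section
/- Let ⟨1⟩ and ⟨x⟩ be the CGST averages (with kernel φ_i = 1 and φ_i(t) = x_i(t) respectively) of a one-dimensional particle system with piecewise analytic trajectories and no particle creation/consumption, satisfying the identities ∂ₜ⟨1⟩ + ∂ₓ⟨ξ⟩ = 0 and ∂ₜ⟨x⟩ + ∂ₓ⟨xξ⟩ = ⟨ξ⟩ at a point where these hold and all averages are differentiable. Assume ⟨1⟩ > 0, let x̄ = ⟨x⟩/⟨1⟩, ξ̄ = ⟨ξ⟩/⟨1⟩. Then the continuity equation can be rewritten as ∂ₜ⟨1⟩ + ∂ₓ[⟨1⟩(∂ₜx̄ + ξ̄ ∂ₓx̄)] = ∂ₓ²[(x̄ξ̄ − ⟨xξ⟩/⟨1⟩)⟨1⟩]. -/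
private lemma slice_x {f : ℝ → ℝ → ℝ} (hf : ContDiff ℝ (⊤ : ℕ∞) (Function.uncurry f)) (t : ℝ) :
    ContDiff ℝ (⊤ : ℕ∞) (fun y => f y t) := hf.comp (contDiff_id.prodMk contDiff_const)

private lemma slice_t {f : ℝ → ℝ → ℝ} (hf : ContDiff ℝ (⊤ : ℕ∞) (Function.uncurry f)) (x : ℝ) :
    ContDiff ℝ (⊤ : ℕ∞) (fun s => f x s) := hf.comp (contDiff_const.prodMk contDiff_id)

/-- Fokker–Planck rewriting of the CGST continuity equation (eq. (8)).
Here `c = ⟨1⟩`, `mx = ⟨x⟩`, `mxi = ⟨ξ⟩`, `mxxi = ⟨xξ⟩`;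
`x̄ = mx/c`, `ξ̄ = mxi/c`. -/
theorem cgst_fokker_planck_form (c mx mxi mxxi : ℝ → ℝ → ℝ)
    (hc : ContDiff ℝ (⊤ : ℕ∞) (Function.uncurry c))
    (hmx : ContDiff ℝ (⊤ : ℕ∞) (Function.uncurry mx))
    (hmxi : ContDiff ℝ (⊤ : ℕ∞) (Function.uncurry mxi))
    (hmxxi : ContDiff ℝ (⊤ : ℕ∞) (Function.uncurry mxxi))
    (hpos : ∀ x t, 0 < c x t)
    (hconti : ∀ x t, deriv (fun s => c x s) t + deriv (fun y => mxi y t) x = 0)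
    (hmom : ∀ x t, deriv (fun s => mx x s) t + deriv (fun y => mxxi y t) x = mxi x t) :
    ∀ x t, deriv (fun s => c x s) t
      + deriv (fun y => c y t *
          (deriv (fun s => mx y s / c y s) t
            + (mxi y t / c y t) * deriv (fun z => mx z t / c z t) y)) x
      = deriv (fun y => deriv (fun z =>
          ((mx z t / c z t) * (mxi z t / c z t) - mxxi z t / c z t) * c z t) y) x := by
  intro x t
  -- single-variable smoothness
  have hcx := slice_x hc t
  have hmxx := slice_x hmx t
  have hmxix := slice_x hmxi t
  have hmxxix := slice_x hmxxi t
  have hne : ∀ y, c y t ≠ 0 := fun y => (hpos y t).ne'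
  -- h z = mx z t * mxi z t / c z t is smooth in z
  have hh : ContDiff ℝ (⊤ : ℕ∞) (fun z => mx z t * mxi z t / c z t) :=
    (hmxx.mul hmxix).div hcx hne
  -- inner function of RHS equals h - mxxi
  have hfun : (fun z => ((mx z t / c z t) * (mxi z t / c z t) - mxxi z t / c z t) * c z t)
      = fun z => mx z t * mxi z t / c z t - mxxi z t := by
    funext z
    field_simp [hne z]
  -- key pointwise identity
  have hA : (fun y => c y t *
          (deriv (fun s => mx y s / c y s) t
            + (mxi y t / c y t) * deriv (fun z => mx z t / c z t) y))
      = fun y => mxi y t + (deriv (fun z => mx z t * mxi z t / c z t) y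
          - deriv (fun z => mxxi z t) y) := by
    funext y
    have dct : DifferentiableAt ℝ (fun s => c y s) t :=
      ((slice_t hc y).differentiable (by simp)).differentiableAt
    have dmxt : DifferentiableAt ℝ (fun s => mx y s) t :=
      ((slice_t hmx y).differentiable (by simp)).differentiableAt
    have dcx : DifferentiableAt ℝ (fun z => c z t) y :=
      (hcx.differentiable (by simp)).differentiableAt
    have dmxx : DifferentiableAt ℝ (fun z => mx z t) y :=
      (hmxx.differentiable (by simp)).differentiableAt
    have dmxix : DifferentiableAt ℝ (fun z => mxi z t) y :=
      (hmxix.differentiable (by simp)).differentiableAt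
    have d1 : deriv (fun s => mx y s / c y s) t
        = (deriv (fun s => mx y s) t * c y t - mx y t * deriv (fun s => c y s) t) / (c y t)^2 :=
      deriv_div dmxt dct (hne y)
    have d2 : deriv (fun z => mx z t / c z t) y
        = (deriv (fun z => mx z t) y * c y t - mx y t * deriv (fun z => c z t) y) / (c y t)^2 :=
      deriv_div dmxx dcx (hne y)
    have d3 : deriv (fun z => mx z t * mxi z t / c z t) y
        = ((deriv (fun z => mx z t) y * mxi y t + mx y t * deriv (fun z => mxi z t) y) * c y t
            - mx y t * mxi y t * deriv (fun z => c z t) y) / (c y t)^2 := by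
      rw [deriv_fun_div (dmxx.fun_mul dmxix) dcx (hne y), deriv_fun_mul dmxx dmxix]
    have e1 : deriv (fun s => c y s) t = -deriv (fun z => mxi z t) y := by
      linarith [hconti y t]
    have e2 : deriv (fun s => mx y s) t = mxi y t - deriv (fun z => mxxi z t) y := by
      linarith [hmom y t]
    rw [d1, d2, d3, e1, e2]
    field_simp [hne y]
    ring
  rw [hfun, hA]
  -- split the derivatives
  have hdh : Differentiable ℝ fun y => deriv (fun z => mx z t * mxi z t / c z t) y :=
    ((contDiff_infty_iff_deriv.mp (hh.of_le (by simp))).2).differentiable (by simp)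
  have hdmxxi : Differentiable ℝ fun y => deriv (fun z => mxxi z t) y :=
    ((contDiff_infty_iff_deriv.mp (hmxxix.of_le (by simp))).2).differentiable (by simp)
  have hsplit : (fun y => deriv (fun z => mx z t * mxi z t / c z t - mxxi z t) y)
      = fun y => deriv (fun z => mx z t * mxi z t / c z t) y - deriv (fun z => mxxi z t) y := by
    funext y
    exact deriv_fun_sub ((hh.differentiable (by simp)).differentiableAt)
      ((hmxxix.differentiable (by simp)).differentiableAt)
  rw [hsplit]
  rw [deriv_fun_add ((hmxix.differentiable (by simp)).differentiableAt)
      ((hdh.fun_sub hdmxxi).differentiableAt),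
    deriv_fun_sub hdh.differentiableAt hdmxxi.differentiableAt]
  linarith [hconti x t]
end

section
/- Under the hypotheses of the previous Fokker–Planck rewriting, assume additionally ∂ₜ⟨x⟩ = 0, ⟨ξ⟩ = 0 (so ∂ₜ⟨1⟩ = 0 by the continuity equation), and ⟨1⟩ > 0 with all fields twice continuously differentiable. Then ∂ₓ²(D⟨1⟩) = 0, where D := −⟨xξ⟩/⟨1⟩. -/
/-- stationary diffusion equation ∂ₓ²(D⟨1⟩) = 0 with the intrinsic
diffusion coefficient D = −⟨xξ⟩/⟨1⟩ (eq. (9)). Here `c = ⟨1⟩`, `mx = ⟨x⟩`,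
`mxi = ⟨ξ⟩`, `mxxi = ⟨xξ⟩`. -/
theorem cgst_stationary_diffusion (c mx mxi mxxi : ℝ → ℝ → ℝ)
    (hc : ContDiff ℝ (⊤ : ℕ∞) (Function.uncurry c))
    (hmx : ContDiff ℝ (⊤ : ℕ∞) (Function.uncurry mx))
    (hmxi : ContDiff ℝ (⊤ : ℕ∞) (Function.uncurry mxi))
    (hmxxi : ContDiff ℝ (⊤ : ℕ∞) (Function.uncurry mxxi))
    (hpos : ∀ x t, 0 < c x t)
    (hconti : ∀ x t, deriv (fun s => c x s) t + deriv (fun y => mxi y t) x = 0)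
    (hmom : ∀ x t, deriv (fun s => mx x s) t + deriv (fun y => mxxi y t) x = mxi x t)
    (hstat : ∀ x t, deriv (fun s => mx x s) t = 0)
    (hxi0 : ∀ x t, mxi x t = 0) :
    ∀ x t, deriv (fun y => deriv (fun z => (-(mxxi z t / c z t)) * c z t) y) x = 0 := by
  intro x t
  have hDc : ∀ t, (fun z => (-(mxxi z t / c z t)) * c z t) = fun z => -mxxi z t := by
    intro t
    funext z
    field_simp [(hpos z t).ne']
  have hinner : (fun y => deriv (fun z => (-(mxxi z t / c z t)) * c z t) y)
      = fun _ => (0 : ℝ) := by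
    funext y
    rw [hDc t, deriv.fun_neg]
    have h := hmom y t
    rw [hstat y t, hxi0 y t, zero_add] at h
    rw [h, neg_zero]
  rw [hinner, deriv_const]
end
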